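/- If F = (P|u) acts on functions by (F f)(ξ) = f(P^{-1}(ξ − u)) with P ∈ GL_g(Z) orthogonal-free (arbitrary invertible integer matrix) and u ∈ Q^g, then the theta function with rational characteristics transforms as F[ϑ[w,0](k − Ωξ | Ω)] = exp(−iπ uᵀΩ̃u) · exp(−2πi uᵀ(P^{-T}k − Ω̃ξ)) · ϑ[Pw + u, 0](P^{-T}k − Ω̃ξ | Ω̃), where Ω̃ = P^{-T} Ω P^{-1}. -/

import Mathlib

open Matrix Complex

noncomputable def zc {g : ℕ} (n : Fin g → ℤ) : Fin g → ℂ := fun i => (n i : ℂ)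

noncomputable def rc {g : ℕ} (x : Fin g → ℝ) : Fin g → ℂ := fun i => (x i : ℂ)

/-- Riemann theta function `ϑ(z|Ω) = Σ_{n ∈ ℤ^g} exp(iπ nᵀΩn + 2πi nᵀz)`. -/
noncomputable def riemannTheta {g : ℕ} (Ω : Matrix (Fin g) (Fin g) ℂ) (z : Fin g → ℂ) : ℂ :=
  ∑' n : Fin g → ℤ,
    Complex.exp (Real.pi * Complex.I * (zc n ⬝ᵥ Ω.mulVec (zc n)) +
      2 * Real.pi * Complex.I * (zc n ⬝ᵥ z))

/-- Theta function with characteristics `ϑ[a,b](z|Ω)`. -/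
noncomputable def thetaChar {g : ℕ} (Ω : Matrix (Fin g) (Fin g) ℂ) (a b z : Fin g → ℂ) : ℂ :=
  Complex.exp (Real.pi * Complex.I * (a ⬝ᵥ Ω.mulVec a) +
    2 * Real.pi * Complex.I * (a ⬝ᵥ (z + b))) *
  riemannTheta Ω (z + Ω.mulVec a + b)

/-- `s`-type Bloch function `φ_k(ξ | w, Ω)`. -/
noncomputable def blochS {g : ℕ} (Ω : Matrix (Fin g) (Fin g) ℂ) (k w ξ : Fin g → ℂ) : ℂ :=
  Complex.exp (Real.pi * Complex.I * (ξ ⬝ᵥ Ω.mulVec ξ)) *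
  Complex.exp (-(2 * Real.pi * Complex.I) * (w ⬝ᵥ k)) *
  thetaChar Ω w 0 (k - Ω.mulVec ξ)

/-!
For `P ∈ GL_g(ℤ)` the map `n ↦ P n` permutes `ℤ^g`, so reindexing the lattice sum gives
`ϑ[a, Pᵀb](Pᵀz | PᵀΩ̃P) = ϑ[Pa, b](z | Ω̃)`. With `Ω = PᵀΩ̃P` this moves the theta function to the
period matrix `Ω̃` and its characteristic from `w` to `Pw`. The translation by `u` is then absorbed
by shifting the characteristic from `Pw` to `Pw + u`, which costs exactly the exponential prefactor.
-/

section DotProduct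

variable {n R : Type*} [Fintype n] [CommSemiring R]

lemma dotProduct_transpose_mulVec_eq_mulVec_dotProduct (A : Matrix n n R) (x y : n → R) :
    x ⬝ᵥ Aᵀ *ᵥ y = (A *ᵥ x) ⬝ᵥ y := by
  rw [dotProduct_transpose_mulVec, dotProduct_comm]

lemma dotProduct_transpose_mul_mul_mulVec (A B : Matrix n n R) (x y : n → R) :
    x ⬝ᵥ (Aᵀ * B * A) *ᵥ y = (A *ᵥ x) ⬝ᵥ B *ᵥ (A *ᵥ y) := by
  rw [← mulVec_mulVec, ← mulVec_mulVec, dotProduct_transpose_mulVec_eq_mulVec_dotProduct]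

end DotProduct

lemma zc_mulVec {g : ℕ} (P : Matrix (Fin g) (Fin g) ℤ) (n : Fin g → ℤ) :
    zc (P *ᵥ n) = P.map ((↑) : ℤ → ℂ) *ᵥ zc n :=
  funext fun i => (Int.castRingHom ℂ).map_mulVec P n i

section Unimodular

variable {g : ℕ} {P : Matrix (Fin g) (Fin g) ℤ}

lemma riemannTheta_transpose_mul_mul (hP : IsUnit P.det) (Ω : Matrix (Fin g) (Fin g) ℂ)
    (z : Fin g → ℂ) :
    riemannTheta ((P.map (↑))ᵀ * Ω * P.map (↑)) ((P.map (↑))ᵀ *ᵥ z) = riemannTheta Ω z := by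
  have hPu : IsUnit P := (isUnit_iff_isUnit_det P).2 hP
  have hbij : Function.Bijective (P *ᵥ ·) :=
    ⟨mulVec_injective_of_isUnit hPu, mulVec_surjective_iff_isUnit.2 hPu⟩
  unfold riemannTheta
  conv_rhs => rw [← (Equiv.ofBijective _ hbij).tsum_eq]
  congr 1
  funext n
  rw [Equiv.ofBijective_apply]
  simp only [zc_mulVec, dotProduct_transpose_mul_mul_mulVec,
    dotProduct_transpose_mulVec_eq_mulVec_dotProduct]

lemma thetaChar_transpose_mul_mul (hP : IsUnit P.det) (Ω : Matrix (Fin g) (Fin g) ℂ)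
    (a b z : Fin g → ℂ) :
    thetaChar ((P.map (↑))ᵀ * Ω * P.map (↑)) a ((P.map (↑))ᵀ *ᵥ b) ((P.map (↑))ᵀ *ᵥ z) =
      thetaChar Ω (P.map (↑) *ᵥ a) b z := by
  unfold thetaChar
  rw [← mulVec_add, ← mulVec_mulVec, ← mulVec_mulVec, ← mulVec_add, ← mulVec_add,
    riemannTheta_transpose_mul_mul hP]
  simp only [dotProduct_transpose_mulVec_eq_mulVec_dotProduct]

end Unimodular

lemma thetaChar_add_char {g : ℕ} {Ω : Matrix (Fin g) (Fin g) ℂ} (hΩ : Ωᵀ = Ω)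
    (a u b z : Fin g → ℂ) :
    thetaChar Ω (a + u) b z =
      cexp (Real.pi * I * (u ⬝ᵥ Ω *ᵥ u) + 2 * Real.pi * I * (u ⬝ᵥ (z + b))) *
        thetaChar Ω a b (z + Ω *ᵥ u) := by
  have hcross : a ⬝ᵥ Ω *ᵥ u = u ⬝ᵥ Ω *ᵥ a := by
    conv_lhs => rw [← hΩ]
    exact dotProduct_transpose_mulVec Ω a u
  unfold thetaChar
  rw [← mul_assoc, ← exp_add, mulVec_add]
  congr 2
  · simp only [dotProduct_add, add_dotProduct, hcross]
    ring
  · abel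

theorem thetaChar_spaceGroup_action_general {g : ℕ} (Ω : Matrix (Fin g) (Fin g) ℂ)
    (hsym : Ωᵀ = Ω)
    (P : Matrix (Fin g) (Fin g) ℤ) (hP : IsUnit P.det)
    (w k ξ : Fin g → ℝ)
    (Pc : Matrix (Fin g) (Fin g) ℂ) (hPc : Pc = P.map fun x => (x : ℂ))
    (uc : Fin g → ℂ)
    (Ωt : Matrix (Fin g) (Fin g) ℂ) (hΩt : Ωt = (Pc⁻¹)ᵀ * Ω * Pc⁻¹) :
    thetaChar Ω (rc w) 0 (rc k - Ω.mulVec (Pc⁻¹.mulVec (rc ξ - uc))) =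
      Complex.exp (-(Real.pi * Complex.I) * (uc ⬝ᵥ Ωt.mulVec uc)) *
      Complex.exp (-(2 * Real.pi * Complex.I) *
        (uc ⬝ᵥ ((Pcᵀ)⁻¹.mulVec (rc k) - Ωt.mulVec (rc ξ)))) *
      thetaChar Ωt (Pc.mulVec (rc w) + uc) 0
        ((Pcᵀ)⁻¹.mulVec (rc k) - Ωt.mulVec (rc ξ)) := by
  have hPc_det : IsUnit Pc.det := by
    rw [hPc, ← Int.cast_det]
    exact hP.map (Int.castRingHom ℂ)
  have hPcT_inv : Pcᵀ * (Pcᵀ)⁻¹ = 1 := mul_nonsing_inv _ (by rwa [det_transpose])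
  have hPcT_Ωt : Pcᵀ * Ωt = Ω * Pc⁻¹ := by
    rw [hΩt, transpose_nonsing_inv, ← mul_assoc, ← mul_assoc, hPcT_inv, one_mul]
  have hΩ : Pcᵀ * Ωt * Pc = Ω := by
    rw [hPcT_Ωt, mul_assoc, nonsing_inv_mul _ hPc_det, mul_one]
  have hΩt_symm : Ωtᵀ = Ωt := by
    rw [hΩt, transpose_mul, transpose_mul, transpose_transpose, hsym, mul_assoc]
  set zt := (Pcᵀ)⁻¹ *ᵥ rc k - Ωt *ᵥ rc ξ
  have harg : rc k - Ω *ᵥ Pc⁻¹ *ᵥ (rc ξ - uc) = Pcᵀ *ᵥ (zt + Ωt *ᵥ uc) := by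
    simp only [zt, mulVec_add, mulVec_sub, mulVec_mulVec, hPcT_inv, hPcT_Ωt, one_mulVec]
    abel
  have hreindex := thetaChar_transpose_mul_mul hP Ωt (rc w) 0 (zt + Ωt *ᵥ uc)
  rw [← hPc, hΩ, mulVec_zero] at hreindex
  rw [harg, hreindex, thetaChar_add_char hΩt_symm, add_zero, ← mul_assoc, ← exp_add, ← exp_add]
  ring_nf
  rw [exp_zero, one_mul]

/-- transformation of the theta function with rational characteristics
under a space-group operation `F = (P|u)`, `(F f)(ξ) = f(P⁻¹(ξ − u))`. -/
theorem thetaChar_spaceGroup_action {g : ℕ} (Ω : Matrix (Fin g) (Fin g) ℂ)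
    (hsym : Ωᵀ = Ω) (hpos : (Ω.map Complex.im).PosDef)
    (P : Matrix (Fin g) (Fin g) ℤ) (hP : IsUnit P.det) (u : Fin g → ℚ)
    (w k ξ : Fin g → ℝ)
    (Pc : Matrix (Fin g) (Fin g) ℂ) (hPc : Pc = P.map fun x => (x : ℂ))
    (uc : Fin g → ℂ) (huc : uc = fun i => ((u i : ℚ) : ℂ))
    (Ωt : Matrix (Fin g) (Fin g) ℂ) (hΩt : Ωt = (Pc⁻¹)ᵀ * Ω * Pc⁻¹) :
    thetaChar Ω (rc w) 0 (rc k - Ω.mulVec (Pc⁻¹.mulVec (rc ξ - uc))) =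
      Complex.exp (-(Real.pi * Complex.I) * (uc ⬝ᵥ Ωt.mulVec uc)) *
      Complex.exp (-(2 * Real.pi * Complex.I) *
        (uc ⬝ᵥ ((Pcᵀ)⁻¹.mulVec (rc k) - Ωt.mulVec (rc ξ)))) *
      thetaChar Ωt (Pc.mulVec (rc w) + uc) 0
        ((Pcᵀ)⁻¹.mulVec (rc k) - Ωt.mulVec (rc ξ)) :=
  thetaChar_spaceGroup_action_general Ω hsym P hP w k ξ Pc hPc uc Ωt hΩt
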